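/- Any configuration (y_1,...,y_n) ∈ {0,1}^n produced by the backward sampling transition probabilities has probability ∏_{i: y_i=1} π_i · ∏_{i: y_i=0} (1-π_i) / B_0(0) if ∑ y_i = n_1, and probability 0 otherwise. -/

import Mathlib

open scoped Classical
open Finset

/-- Product Bernoulli weight of a configuration: individual `i+1` (1-based) has
probability `π (i+1)` of being a case (`true`). -/
noncomputable def wgt (n : ℕ) (π : ℕ → ℝ) (y : Fin n → Bool) : ℝ :=
  ∏ i : Fin n, if y i then π (i.1 + 1) else 1 - π (i.1 + 1)

/-- Probability of an event under the product Bernoulli law. -/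
noncomputable def prb (n : ℕ) (π : ℕ → ℝ) (E : (Fin n → Bool) → Prop) : ℝ :=
  ∑ y : Fin n → Bool, if E y then wgt n π y else 0

/-- Partial sum `Z_j = Y_1 + ... + Y_j`. -/
def zsum (n : ℕ) (y : Fin n → Bool) (j : ℕ) : ℤ :=
  ((Finset.univ.filter (fun i : Fin n => i.1 < j ∧ y i)).card : ℤ)

/-- Tail sum `Y_{i+1} + ... + Y_n`. -/
def tcnt (n : ℕ) (y : Fin n → Bool) (i : ℕ) : ℤ :=
  ((Finset.univ.filter (fun k : Fin n => i ≤ k.1 ∧ y k)).card : ℤ)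

/-- Forward quantity `F_i(m) = P(Z_i = m)`. -/
noncomputable def fwd (n : ℕ) (π : ℕ → ℝ) (i : ℕ) (m : ℤ) : ℝ :=
  prb n π (fun y => zsum n y i = m)

/-- Backward quantity `B_i(m) = P(Y_{i+1} + ... + Y_n = n1 - m)`. -/
noncomputable def bwd (n : ℕ) (π : ℕ → ℝ) (n1 : ℤ) (i : ℕ) (m : ℤ) : ℝ :=
  prb n π (fun y => tcnt n y i = n1 - m)


/-- The law of the heterogeneous Markov chain generated by backward sampling:
product over individuals of the transition probabilities
`π_i·B_i(Z_{i-1}+1)/B_{i-1}(Z_{i-1})` (case) and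
`(1-π_i)·B_i(Z_{i-1})/B_{i-1}(Z_{i-1})` (control). -/
noncomputable def sampLaw (n : ℕ) (π : ℕ → ℝ) (n1 : ℤ) (y : Fin n → Bool) : ℝ :=
  ∏ i : Fin n,
    if y i then
      π (i.1 + 1) * bwd n π n1 (i.1 + 1) (zsum n y i.1 + 1) / bwd n π n1 i.1 (zsum n y i.1)
    else
      (1 - π (i.1 + 1)) * bwd n π n1 (i.1 + 1) (zsum n y i.1) / bwd n π n1 i.1 (zsum n y i.1)

/-! Along a configuration `y`, put `g j = B_j(Z_j)`. The `i`-th transition factor is the Bernoulli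
weight of `y_i` times `g (i + 1) / g i`, so the product telescopes to `wgt y · g n / g 0`, where
`g 0 = B_0(0)` and `g n = B_n(Z_n)` is `1` or `0` according as `Z_n = n1` or not. If `Z_n = n1`,
every `g j` is positive since `y` itself lies in the event defining it, which licenses the
telescoping; otherwise the last factor already vanishes. -/

lemma eq_mul_prod_range_div₀ {G₀ : Type*} [CommGroupWithZero G₀] (f : ℕ → G₀) (n : ℕ)
    (hf : ∀ i < n, f i ≠ 0) : f 0 * ∏ i ∈ range n, f (i + 1) / f i = f n := by
  induction n with
  | zero => simp
  | succ n ih =>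
    rw [prod_range_succ, ← mul_assoc, ih fun i hi => hf i (by omega),
      mul_div_cancel₀ _ (hf n n.lt_succ_self)]

lemma sum_wgt (n : ℕ) (π : ℕ → ℝ) : ∑ y : Fin n → Bool, wgt n π y = 1 := by
  simp only [wgt]
  rw [← Fintype.prod_sum fun (i : Fin n) (b : Bool) =>
    if b then π (i.1 + 1) else 1 - π (i.1 + 1)]
  simp

lemma prb_const (n : ℕ) (π : ℕ → ℝ) (P : Prop) : prb n π (fun _ => P) = if P then 1 else 0 := by
  split_ifs with hP <;> simp [prb, hP, sum_wgt]

lemma wgt_pos {n : ℕ} {π : ℕ → ℝ} (hπ : ∀ i, 1 ≤ i → i ≤ n → 0 < π i ∧ π i < 1)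
    (y : Fin n → Bool) : 0 < wgt n π y := by
  refine prod_pos fun i _ => ?_
  have := hπ (i.1 + 1) (by omega) i.2
  split_ifs <;> linarith

lemma wgt_le_prb {n : ℕ} {π : ℕ → ℝ} {E : (Fin n → Bool) → Prop} (hw : ∀ z, 0 ≤ wgt n π z)
    {y : Fin n → Bool} (hy : E y) : wgt n π y ≤ prb n π E := by
  have := single_le_sum (f := fun z => if E z then wgt n π z else 0)
    (fun z _ => by split_ifs <;> simp [hw]) (mem_univ y)
  simpa [prb, hy] using this

lemma zsum_zero (n : ℕ) (y : Fin n → Bool) : zsum n y 0 = 0 := by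
  simp [zsum]

lemma zsum_succ {n : ℕ} (y : Fin n → Bool) (i : Fin n) :
    zsum n y (i + 1) = zsum n y i + if y i then 1 else 0 := by
  have hsplit : univ.filter (fun k : Fin n => k.1 < i + 1 ∧ y k) =
      univ.filter (fun k : Fin n => k.1 < i ∧ y k) ∪ univ.filter (fun k => k = i ∧ y k) := by
    ext k
    simp only [mem_filter, mem_univ, true_and, mem_union, Fin.ext_iff, Nat.lt_succ_iff_lt_or_eq]
    tauto
  have hdisj : Disjoint (univ.filter (fun k : Fin n => k.1 < i ∧ y k))
      (univ.filter (fun k => k = i ∧ y k)) :=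
    disjoint_filter.2 fun k _ h₁ h₂ => (h₂.1 ▸ h₁.1).false
  unfold zsum
  rw [hsplit, card_union_of_disjoint hdisj]
  by_cases hy : y i <;> simp [hy, filter_and, filter_eq']

lemma zsum_add_tcnt {n : ℕ} (y : Fin n → Bool) (i : ℕ) :
    zsum n y i + tcnt n y i = zsum n y n := by
  unfold zsum tcnt
  rw [← Nat.cast_add, ← card_union_of_disjoint]
  · congr 2
    ext k
    simp only [mem_filter, mem_univ, true_and, mem_union]
    constructor
    · rintro (h | h) <;> exact ⟨k.2, h.2⟩
    · rintro ⟨-, h⟩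
      exact (lt_or_ge k.1 i).imp (⟨·, h⟩) (⟨·, h⟩)
  · exact disjoint_filter.2 fun k _ h₁ h₂ => absurd h₁.1 (not_lt.2 h₂.1)

lemma tcnt_self {n : ℕ} (y : Fin n → Bool) : tcnt n y n = 0 := by
  linarith [zsum_add_tcnt y n]

lemma bwd_self (n : ℕ) (π : ℕ → ℝ) (n1 m : ℤ) : bwd n π n1 n m = if m = n1 then 1 else 0 := by
  simp only [bwd, tcnt_self, prb_const]
  congr 1
  exact propext ⟨fun _ => by omega, fun _ => by omega⟩

lemma bwd_zsum_pos {n : ℕ} {π : ℕ → ℝ} (hπ : ∀ i, 1 ≤ i → i ≤ n → 0 < π i ∧ π i < 1)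
    {n1 : ℤ} {y : Fin n → Bool} (hy : zsum n y n = n1) (i : ℕ) :
    0 < bwd n π n1 i (zsum n y i) :=
  (wgt_pos hπ y).trans_le <| wgt_le_prb (fun z => (wgt_pos hπ z).le) <| by
    linarith [zsum_add_tcnt y i]

lemma sampLaw_eq_wgt_mul_prod (n : ℕ) (π : ℕ → ℝ) (n1 : ℤ) (y : Fin n → Bool) :
    sampLaw n π n1 y = wgt n π y *
      ∏ i ∈ range n, bwd n π n1 (i + 1) (zsum n y (i + 1)) / bwd n π n1 i (zsum n y i) := by
  rw [wgt, ← Fin.prod_univ_eq_prod_range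
    (fun i => bwd n π n1 (i + 1) (zsum n y (i + 1)) / bwd n π n1 i (zsum n y i)),
    ← prod_mul_distrib]
  refine prod_congr rfl fun i _ => ?_
  rw [zsum_succ]
  split_ifs <;> simp only [add_zero, mul_div_assoc]

theorem backward_sampling_configuration_probability_general (n : ℕ) (π : ℕ → ℝ) (n1 : ℤ)
    (hπ : ∀ i, 1 ≤ i → i ≤ n → 0 < π i ∧ π i < 1)
    (hn1 : 0 ≤ n1 ∧ n1 ≤ (n : ℤ)) :
    ∀ y : Fin n → Bool,
      sampLaw n π n1 y =
        if zsum n y n = n1 then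
          (∏ i ∈ Finset.univ.filter (fun i : Fin n => y i = true), π (i.1 + 1)) *
            (∏ i ∈ Finset.univ.filter (fun i : Fin n => y i = false), (1 - π (i.1 + 1))) /
            bwd n π n1 0 0
        else 0 := by
  intro y
  have hwgt : (∏ i ∈ univ.filter (fun i : Fin n => y i = true), π (i.1 + 1)) *
      (∏ i ∈ univ.filter (fun i : Fin n => y i = false), (1 - π (i.1 + 1))) = wgt n π y := by
    simp [wgt, prod_ite]
  rw [hwgt, sampLaw_eq_wgt_mul_prod]
  split_ifs with hy
  · have htele := eq_mul_prod_range_div₀ (fun j => bwd n π n1 j (zsum n y j)) n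
      fun i _ => (bwd_zsum_pos hπ hy i).ne'
    rw [bwd_self, if_pos hy, zsum_zero] at htele
    rw [eq_inv_of_mul_eq_one_right htele, div_eq_mul_inv]
  · have hn : n ≠ 0 := by
      rintro rfl
      exact hy (by rw [zsum_zero]; omega)
    refine mul_eq_zero_of_right _ (prod_eq_zero (mem_range.2 (Nat.sub_one_lt hn)) ?_)
    rw [Nat.sub_one_add_one hn, bwd_self, if_neg hy, zero_div]

/-- Explicit formula for the probability of a configuration under backward
sampling: `∏_{i : y_i = 1} π_i · ∏_{i : y_i = 0} (1 - π_i) / B_0(0)` if the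
configuration has exactly `n1` cases, and `0` otherwise. -/
theorem backward_sampling_configuration_probability (n : ℕ) (π : ℕ → ℝ) (n1 : ℤ)
    (hπ : ∀ i, 1 ≤ i → i ≤ n → 0 < π i ∧ π i < 1)
    (hn1 : 0 ≤ n1 ∧ n1 ≤ (n : ℤ)) (hB : 0 < bwd n π n1 0 0) :
    ∀ y : Fin n → Bool,
      sampLaw n π n1 y =
        if zsum n y n = n1 then
          (∏ i ∈ Finset.univ.filter (fun i : Fin n => y i = true), π (i.1 + 1)) *
            (∏ i ∈ Finset.univ.filter (fun i : Fin n => y i = false), (1 - π (i.1 + 1))) /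
            bwd n π n1 0 0
        else 0 :=
  backward_sampling_configuration_probability_general n π n1 hπ hn1
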